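/- For a coherent choice function f: I_f(f(A)) = I_f(A) for all A ⊆ X. -/
import Mathlib


variable {α : Type*} [DecidableEq α] [Fintype α]

def Coherent (f : Finset α → Finset α) : Prop :=
  (∀ A, f A ⊆ A) ∧
  (∀ A x, x ∈ A → x ∉ f A → f (A.erase x) ⊆ f A) ∧
  (∀ A B x, B ⊆ A → x ∈ B → x ∈ f A → x ∈ f B)

def If (f : Finset α → Finset α) (A : Finset α) : Finset α :=
  A ∪ Finset.univ.filter (fun x => x ∉ A ∧ x ∉ f (insert x A))

lemma coherent_key (f : Finset α → Finset α) (hf : Coherent f) :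
    ∀ n (A B : Finset α), (A \ B).card = n → f A ⊆ B → B ⊆ A → f B = f A := by
  intro n
  induction n with
  | zero =>
    intro A B hc h1 h2
    have hAB : A ⊆ B := by
      have : A \ B = ∅ := Finset.card_eq_zero.mp hc
      intro x hx
      by_contra hxB
      exact absurd (Finset.mem_sdiff.mpr ⟨hx, hxB⟩) (by simp [this])
    rw [Finset.Subset.antisymm hAB h2]
  | succ n ih =>
    intro A B hc h1 h2
    have hne : (A \ B).Nonempty := by
      rw [← Finset.card_pos, hc]; omega
    obtain ⟨y, hy⟩ := hne
    have hyA : y ∈ A := (Finset.mem_sdiff.mp hy).1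
    have hyB : y ∉ B := (Finset.mem_sdiff.mp hy).2
    have hyf : y ∉ f A := fun h => hyB (h1 h)
    have h3 : f (A.erase y) ⊆ f A := hf.2.1 A y hyA hyf
    have h4 : f A ⊆ f (A.erase y) := by
      intro z hz
      exact hf.2.2 A (A.erase y) z (Finset.erase_subset _ _)
        (Finset.mem_erase.mpr ⟨fun h => hyf (h ▸ hz), hf.1 A hz⟩) hz
    have heq : f (A.erase y) = f A := Finset.Subset.antisymm h3 h4
    have hcard : ((A.erase y) \ B).card = n := by
      have : (A.erase y) \ B = (A \ B).erase y := by
        ext z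
        simp only [Finset.mem_sdiff, Finset.mem_erase]
        tauto
      rw [this, Finset.card_erase_of_mem hy, hc]; omega
    have hBe : B ⊆ A.erase y := fun z hz =>
      Finset.mem_erase.mpr ⟨fun h => hyB (h ▸ hz), h2 hz⟩
    have := ih (A.erase y) B hcard (heq ▸ h1) hBe
    rw [this, heq]

theorem If_f_eq_If (f : Finset α → Finset α) (hf : Coherent f)
    (A : Finset α) : If f (f A) = If f A := by
  have key : ∀ A B : Finset α, f A ⊆ B → B ⊆ A → f B = f A :=
    fun A B h1 h2 => coherent_key f hf _ A B rfl h1 h2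
  ext x
  simp only [If, Finset.mem_union, Finset.mem_filter, Finset.mem_univ, true_and]
  by_cases hxA : x ∈ A
  · by_cases hxf : x ∈ f A
    · simp [hxf, hxA]
    · have hins : f (insert x (f A)) = f A := by
        apply key
        · exact Finset.subset_insert _ _
        · exact Finset.insert_subset hxA (hf.1 A)
      simp only [hxA, hxf, hins]
      tauto
  · have hxf : x ∉ f A := fun h => hxA (hf.1 A h)
    have heq : f (insert x (f A)) = f (insert x A) := by
      apply key
      · intro y hy
        have hyA : y ∈ insert x A := hf.1 _ hy
        rcases Finset.mem_insert.mp hyA with h | h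
        · exact h ▸ Finset.mem_insert_self _ _
        · exact Finset.mem_insert_of_mem
            (hf.2.2 (insert x A) A y (Finset.subset_insert _ _) h hy)
      · exact Finset.insert_subset_insert _ (hf.1 A)
    simp [hxA, hxf, heq]
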